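/- arXiv:1305.3447 — 4 statements merged into one kernel-verified Lean document; each statement's English description precedes it below -/
import Mathlib

section
/- Let (X,C,R,κ) be a mass action system whose graph of complexes is the chain with vertex set C = {1,…,c} and arc set R = {(i, i−1) : 2 ≤ i ≤ c} ∪ {(i, i+1) : 2 ≤ i ≤ c−1}, and whose deficiency satisfies δ = 1. Let h ∈ ℝ^c be a fixed vector with 0 ≠ h ∈ ker B ∩ ran I_κ and ∑_{i=2}^c h_i ≤ 0, and let ϑ ∈ ℝ^c satisfy I_κ·ϑ = h. Then ϑ_2 = −(1/κ_{21})·∑_{i=2}^c h_i, and for every j ∈ {3,…,c}, ϑ_j = (κ_{j−1,j}/κ_{j,j−1})·ϑ_{j−1} − (1/κ_{j,j−1})·∑_{i=j}^c h_i. -/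
open Finset

/-- The matrix `I_κ ∈ ℝ^{c×c}` with `(I_κ)_{ji} = κ_{ij}` for `j ≠ i` and
`(I_κ)_{ii} = −∑_{k≠i} κ_{ik}`. -/
noncomputable def Ikappa {c : ℕ} (κ : Fin c → Fin c → ℝ) : Matrix (Fin c) (Fin c) ℝ :=
  Matrix.of fun j i => if j = i then -∑ k ∈ Finset.univ.erase i, κ i k else κ i j

/-- `κ` is (the extension by zero of) a family of positive rate coefficients on `R`. -/
def ValidK {c : ℕ} (R : Finset (Fin c × Fin c)) (κ : Fin c → Fin c → ℝ) : Prop :=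
  (∀ p ∈ R, 0 < κ p.1 p.2) ∧ ∀ p : Fin c × Fin c, p ∉ R → κ p.1 p.2 = 0

/-- The monomial map `Θ : ℝ^n_{>0} → ℝ^c`, `Θ(x)_i = ∏_s x_s^{B_{si}}`. -/
noncomputable def Theta {n c : ℕ} (B : Matrix (Fin n) (Fin c) ℕ) (x : Fin n → ℝ) :
    Fin c → ℝ :=
  fun i => ∏ s, x s ^ B s i

/-- The set of positive steady states `E^κ_+` is nonempty. -/
def EposNonempty {n c : ℕ} (B : Matrix (Fin n) (Fin c) ℕ) (κ : Fin c → Fin c → ℝ) : Prop :=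
  ∃ x : Fin n → ℝ, (∀ s, 0 < x s) ∧
    (B.map (Nat.cast : ℕ → ℝ)).mulVec ((Ikappa κ).mulVec (Theta B x)) = 0

/-- The deficiency `δ = dim(ker B ∩ ran I_κ)` equals one. -/
def DeficiencyOneAt {n c : ℕ} (B : Matrix (Fin n) (Fin c) ℕ)
    (κ : Fin c → Fin c → ℝ) : Prop :=
  Module.finrank ℝ
    ↥(LinearMap.ker (Matrix.mulVecLin (B.map (Nat.cast : ℕ → ℝ))) ⊓
      LinearMap.range (Matrix.mulVecLin (Ikappa κ))) = 1

/-- The graph of complexes of the "chain" network: complexes `C_1, …, C_c` are represented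
by `0, …, c-1 : Fin c`; the arcs are `(i, i−1)` for `2 ≤ i ≤ c` and `(i, i+1)` for
`2 ≤ i ≤ c−1` (in the 1-based labelling of the paper). -/
def chainR (c : ℕ) : Finset (Fin c × Fin c) :=
  Finset.univ.filter
    (fun p => 1 ≤ p.1.val ∧ (p.1.val = p.2.val + 1 ∨ p.2.val = p.1.val + 1))

/-- The predecessor of a complex along the chain (`C_j ↦ C_{j−1}`). -/
def fpred {c : ℕ} (j : Fin c) : Fin c :=
  ⟨j.val - 1, Nat.lt_of_le_of_lt (Nat.sub_le _ _) j.isLt⟩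

/-!
Summing the rows `r ∈ S` of `I_κ ϑ = h` cancels every arc inside `S`, leaving the flux into `S`
minus the flux out of `S`. For the chain and `S = {j, …, c}` only the two arcs between `j - 1`
and `j` cross the cut, so `∑_{i ≥ j} h_i = κ_{j-1,j} ϑ_{j-1} - κ_{j,j-1} ϑ_j`; there is no arc
from `1` to `2`, and solving for `ϑ_j` gives both formulas.
-/

theorem Ikappa_apply {c : ℕ} (κ : Fin c → Fin c → ℝ) (r i : Fin c) :
    Ikappa κ r i = κ i r - if r = i then ∑ k, κ i k else 0 := by
  by_cases hri : r = i
  · subst hri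
    rw [if_pos rfl, ← add_sum_erase _ _ (mem_univ r)]
    simp [Ikappa]
  · simp [Ikappa, hri]

theorem sum_Ikappa_apply {c : ℕ} (κ : Fin c → Fin c → ℝ) (S : Finset (Fin c)) (i : Fin c) :
    ∑ r ∈ S, Ikappa κ r i = ∑ r ∈ S, κ i r - if i ∈ S then ∑ k, κ i k else 0 := by
  simp only [Ikappa_apply, sum_sub_distrib, sum_ite_eq']

theorem sum_Ikappa_mulVec {c : ℕ} (κ : Fin c → Fin c → ℝ) (ϑ : Fin c → ℝ)
    (S : Finset (Fin c)) :
    ∑ r ∈ S, (Ikappa κ).mulVec ϑ r =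
      ∑ i ∈ Sᶜ, (∑ r ∈ S, κ i r) * ϑ i - ∑ i ∈ S, (∑ k ∈ Sᶜ, κ i k) * ϑ i := by
  simp only [Matrix.mulVec, dotProduct]
  rw [sum_comm]
  simp only [← sum_mul, sum_Ikappa_apply, sub_mul, ite_mul, zero_mul, sum_sub_distrib,
    sum_ite_mem, univ_inter]
  rw [← sum_add_sum_compl S]
  simp only [← sum_add_sum_compl S (κ _), add_mul, sum_add_distrib]
  ring

section Chain

variable {c : ℕ} {κ : Fin c → Fin c → ℝ}

theorem fpred_val (j : Fin c) : (fpred j).val = j.val - 1 := rfl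

theorem ValidK.chainR_eq_zero (hκ : ValidK (chainR c) κ) {i k : Fin c}
    (hik : ¬(1 ≤ i.val ∧ (i.val = k.val + 1 ∨ k.val = i.val + 1))) : κ i k = 0 :=
  hκ.2 (i, k) (by simpa [chainR] using hik)

theorem ValidK.chainR_pos (hκ : ValidK (chainR c) κ) {j : Fin c} (hj : 1 ≤ j.val) :
    0 < κ j (fpred j) :=
  hκ.1 (j, fpred j) (by simp only [chainR, mem_filter, mem_univ, true_and, fpred_val]; omega)

theorem ValidK.chainR_inflow (hκ : ValidK (chainR c) κ) (ϑ : Fin c → ℝ) {j : Fin c}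
    (hj : 1 ≤ j.val) :
    ∑ i ∈ (univ.filter fun i : Fin c => j.val ≤ i.val)ᶜ,
        (∑ r ∈ univ.filter (fun r : Fin c => j.val ≤ r.val), κ i r) * ϑ i =
      κ (fpred j) j * ϑ (fpred j) := by
  have hinner : ∑ r ∈ univ.filter (fun r : Fin c => j.val ≤ r.val), κ (fpred j) r =
      κ (fpred j) j := by
    refine sum_eq_single j (fun r hr hrj => hκ.chainR_eq_zero ?_) (by simp)
    simp only [mem_filter, mem_univ, true_and] at hr
    rw [ne_eq, Fin.ext_iff] at hrj
    rw [fpred_val]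
    omega
  have hmem : fpred j ∈ (univ.filter fun i : Fin c => j.val ≤ i.val)ᶜ := by
    simp only [compl_filter, mem_filter, mem_univ, true_and, not_le, fpred_val]
    omega
  refine (sum_eq_single (fpred j) (fun i hi hij => ?_) (fun h => absurd hmem h)).trans
    (by rw [hinner])
  simp only [compl_filter, mem_filter, mem_univ, true_and, not_le] at hi
  rw [ne_eq, Fin.ext_iff, fpred_val] at hij
  rw [sum_eq_zero fun r hr => hκ.chainR_eq_zero ?_, zero_mul]
  simp only [mem_filter, mem_univ, true_and] at hr
  omega

theorem ValidK.chainR_outflow (hκ : ValidK (chainR c) κ) (ϑ : Fin c → ℝ) {j : Fin c}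
    (hj : 1 ≤ j.val) :
    ∑ i ∈ univ.filter (fun i : Fin c => j.val ≤ i.val),
        (∑ k ∈ (univ.filter fun k : Fin c => j.val ≤ k.val)ᶜ, κ i k) * ϑ i =
      κ j (fpred j) * ϑ j := by
  have hinner : ∑ k ∈ (univ.filter fun k : Fin c => j.val ≤ k.val)ᶜ, κ j k = κ j (fpred j) := by
    refine sum_eq_single (fpred j) (fun k hk hkj => hκ.chainR_eq_zero ?_)
      (by simp only [compl_filter, mem_filter, mem_univ, true_and, not_le, fpred_val]; omega)
    simp only [compl_filter, mem_filter, mem_univ, true_and, not_le] at hk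
    rw [ne_eq, Fin.ext_iff, fpred_val] at hkj
    omega
  refine (sum_eq_single j (fun i hi hij => ?_) (by simp)).trans (by rw [hinner])
  simp only [mem_filter, mem_univ, true_and] at hi
  rw [ne_eq, Fin.ext_iff] at hij
  rw [sum_eq_zero fun k hk => hκ.chainR_eq_zero ?_, zero_mul]
  simp only [compl_filter, mem_filter, mem_univ, true_and, not_le] at hk
  omega

theorem ValidK.chainR_sum_ge {h ϑ : Fin c → ℝ} (hκ : ValidK (chainR c) κ)
    (hϑ : (Ikappa κ).mulVec ϑ = h) {j : Fin c} (hj : 1 ≤ j.val) :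
    ∑ i ∈ univ.filter (fun i : Fin c => j.val ≤ i.val), h i =
      κ (fpred j) j * ϑ (fpred j) - κ j (fpred j) * ϑ j := by
  rw [← hϑ, sum_Ikappa_mulVec, hκ.chainR_inflow ϑ hj, hκ.chainR_outflow ϑ hj]

end Chain

theorem stmt1_general {c : ℕ} (hc : 2 ≤ c)
    (κ : Fin c → Fin c → ℝ) (hκ : ValidK (chainR c) κ)
    (h : Fin c → ℝ)
    (ϑ : Fin c → ℝ) (hϑ : (Ikappa κ).mulVec ϑ = h) :
    ϑ ⟨1, lt_of_lt_of_le one_lt_two hc⟩ =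
      -(1 / κ ⟨1, lt_of_lt_of_le one_lt_two hc⟩ ⟨0, lt_of_lt_of_le two_pos hc⟩) *
        ∑ i ∈ Finset.univ.filter (fun i : Fin c => 1 ≤ i.val), h i ∧
    ∀ j : Fin c, 2 ≤ j.val →
      ϑ j = (κ (fpred j) j / κ j (fpred j)) * ϑ (fpred j) -
        (1 / κ j (fpred j)) *
          ∑ i ∈ Finset.univ.filter (fun i : Fin c => j.val ≤ i.val), h i := by
  constructor
  · set j₁ : Fin c := ⟨1, lt_of_lt_of_le one_lt_two hc⟩
    have hpred : fpred j₁ = ⟨0, lt_of_lt_of_le two_pos hc⟩ := rfl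
    have hstart : κ (fpred j₁) j₁ = 0 := hκ.chainR_eq_zero (by simp [hpred, j₁])
    have hpos := hκ.chainR_pos (j := j₁) le_rfl
    rw [← hpred, hκ.chainR_sum_ge hϑ (j := j₁) le_rfl, hstart]
    field_simp
    ring
  · intro j hj
    have hpos := hκ.chainR_pos (j := j) (by omega)
    rw [hκ.chainR_sum_ge hϑ (by omega)]
    field_simp
    ring

theorem stmt1 {n c : ℕ} (hc : 2 ≤ c)
    (B : Matrix (Fin n) (Fin c) ℕ)
    (κ : Fin c → Fin c → ℝ) (hκ : ValidK (chainR c) κ)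
    (hdef : DeficiencyOneAt B κ)
    (h : Fin c → ℝ) (hh0 : h ≠ 0)
    (hker : (B.map (Nat.cast : ℕ → ℝ)).mulVec h = 0)
    (hran : ∃ v : Fin c → ℝ, (Ikappa κ).mulVec v = h)
    (hCpp : ∑ i ∈ Finset.univ.filter (fun i : Fin c => 1 ≤ i.val), h i ≤ 0)
    (ϑ : Fin c → ℝ) (hϑ : (Ikappa κ).mulVec ϑ = h) :
    ϑ ⟨1, lt_of_lt_of_le one_lt_two hc⟩ =
      -(1 / κ ⟨1, lt_of_lt_of_le one_lt_two hc⟩ ⟨0, lt_of_lt_of_le two_pos hc⟩) *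
        ∑ i ∈ Finset.univ.filter (fun i : Fin c => 1 ≤ i.val), h i ∧
    ∀ j : Fin c, 2 ≤ j.val →
      ϑ j = (κ (fpred j) j / κ j (fpred j)) * ϑ (fpred j) -
        (1 / κ j (fpred j)) *
          ∑ i ∈ Finset.univ.filter (fun i : Fin c => j.val ≤ i.val), h i :=
  stmt1_general hc κ hκ h ϑ hϑ
end

section
/- Let (X,C,R) be a chemical reaction network whose graph of complexes is the chain with vertex set C = {1,…,c} and arc set R = {(i, i−1) : 2 ≤ i ≤ c} ∪ {(i, i+1) : 2 ≤ i ≤ c−1}, and whose deficiency satisfies δ = 1. Let h ∈ ℝ^c be a fixed vector with 0 ≠ h ∈ ker B ∩ ran I_κ and ∑_{i=2}^c h_i ≤ 0. Then there exists κ : R → ℝ_{>0} such that E^κ_+ ≠ ∅ if and only if ∑_{i=2}^c h_i < 0. -/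
open Finset

/-!
If `x` is a positive steady state, then `I_κ Θ(x)` lies in `ker B ∩ ran I_κ`, which by `δ = 1`
is the line through `h`. Complex `1` is a sink fed by complex `2`, so the first coordinate of
`I_κ Θ(x)` is positive; hence `h_1 > 0`, and since the columns of `I_κ` sum to zero,
`∑_{i ≥ 2} h_i = -h_1 < 0`. Conversely, if `h_1 > 0`, choose rates whose net flux across the arc
between complexes `t + 1` and `t` is `h_1 + ⋯ + h_t`; then `I_κ 1 = h ∈ ker B`, so `x = 1` is a
positive steady state.
-/

open Matrix

section Ikappa

variable {c : ℕ}

lemma Ikappa_mulVec_apply (κ : Fin c → Fin c → ℝ) (v : Fin c → ℝ) (j : Fin c) :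
    (Ikappa κ *ᵥ v) j = ∑ i, κ i j * v i - (∑ k, κ j k) * v j := by
  rw [mulVec, dotProduct, ← add_sum_erase _ _ (mem_univ j),
    ← add_sum_erase _ _ (mem_univ j), ← add_sum_erase _ (fun k => κ j k) (mem_univ j)]
  have hoff : ∀ i ∈ univ.erase j, Ikappa κ j i * v i = κ i j * v i := fun i hi => by
    simp [Ikappa, (ne_of_mem_erase hi).symm]
  have hdiag : Ikappa κ j j = -∑ k ∈ univ.erase j, κ j k := by simp [Ikappa]
  rw [sum_congr rfl hoff, hdiag]
  ring

lemma sum_Ikappa_mulVec_s2 (κ : Fin c → Fin c → ℝ) (v : Fin c → ℝ) :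
    ∑ j, (Ikappa κ *ᵥ v) j = 0 := by
  simp only [Ikappa_mulVec_apply, sum_sub_distrib, sum_mul]
  rw [sum_comm, sub_self]

end Ikappa

lemma validK_indicator {c : ℕ} (R : Finset (Fin c × Fin c)) :
    ValidK R (fun i j => if (i, j) ∈ R then 1 else 0) :=
  ⟨fun p hp => by simp [hp], fun p hp => by simp [hp]⟩

lemma Theta_pos {n c : ℕ} (B : Matrix (Fin n) (Fin c) ℕ) {x : Fin n → ℝ}
    (hx : ∀ s, 0 < x s) (i : Fin c) : 0 < Theta B x i :=
  prod_pos fun s _ => pow_pos (hx s) _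

lemma Theta_one {n c : ℕ} (B : Matrix (Fin n) (Fin c) ℕ) :
    Theta B (fun _ => 1) = fun _ => 1 := by
  funext i; simp [Theta]

lemma exists_smul_eq_Ikappa_mulVec {n c : ℕ} {B : Matrix (Fin n) (Fin c) ℕ}
    {κ : Fin c → Fin c → ℝ} (hdef : DeficiencyOneAt B κ) {h : Fin c → ℝ} (hh0 : h ≠ 0)
    (hker : B.map (Nat.cast : ℕ → ℝ) *ᵥ h = 0) (hran : ∃ v, Ikappa κ *ᵥ v = h)
    {y : Fin c → ℝ} (hy : B.map (Nat.cast : ℕ → ℝ) *ᵥ (Ikappa κ *ᵥ y) = 0) :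
    ∃ a : ℝ, a • h = Ikappa κ *ᵥ y := by
  have hh : h ∈ LinearMap.ker (mulVecLin (B.map (Nat.cast : ℕ → ℝ))) ⊓
      LinearMap.range (mulVecLin (Ikappa κ)) := ⟨hker, hran⟩
  have hy : Ikappa κ *ᵥ y ∈ LinearMap.ker (mulVecLin (B.map (Nat.cast : ℕ → ℝ))) ⊓
      LinearMap.range (mulVecLin (Ikappa κ)) := ⟨hy, y, rfl⟩
  obtain ⟨a, ha⟩ := exists_smul_eq_of_finrank_eq_one hdef (x := ⟨h, hh⟩)
    (by simpa using hh0) ⟨_, hy⟩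
  exact ⟨a, congrArg Subtype.val ha⟩

lemma chainR_mem {c : ℕ} {i j : Fin c} :
    (i, j) ∈ chainR c ↔ 1 ≤ i.val ∧ (i.val = j.val + 1 ∨ j.val = i.val + 1) := by
  simp [chainR]

lemma Ikappa_mulVec_pos_of_sink {c : ℕ} {R : Finset (Fin c × Fin c)} {κ : Fin c → Fin c → ℝ}
    (hκ : ValidK R κ) {y : Fin c → ℝ} (hy : ∀ i, 0 < y i) {i j : Fin c}
    (hsink : ∀ k, (j, k) ∉ R) (hij : (i, j) ∈ R) : 0 < (Ikappa κ *ᵥ y) j := by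
  have hout : ∀ k, κ j k = 0 := fun k => hκ.2 (j, k) (hsink k)
  rw [Ikappa_mulVec_apply]
  simp only [hout, sum_const_zero, zero_mul, sub_zero]
  refine sum_pos' (fun k _ => ?_) ⟨i, mem_univ _, mul_pos (hκ.1 _ hij) (hy i)⟩
  by_cases hk : (k, j) ∈ R
  · exact (mul_pos (hκ.1 _ hk) (hy k)).le
  · simp [hκ.2 _ hk]

section Chain

variable {c : ℕ}

def chainRates (down up : ℕ → ℝ) : Fin c → Fin c → ℝ :=
  fun i j => if i.val = j.val + 1 then down j.val else if j.val = i.val + 1 then up i.val else 0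

lemma validK_chainRates {down up : ℕ → ℝ} (hdown : ∀ t, 0 < down t) (hup0 : up 0 = 0)
    (hup : ∀ t, t ≠ 0 → 0 < up t) : ValidK (chainR c) (chainRates down up) := by
  refine ⟨fun ⟨i, j⟩ hij => ?_, fun ⟨i, j⟩ hij => ?_⟩ <;>
    simp only [chainR_mem] at hij <;> simp only [chainRates]
  · split_ifs
    · exact hdown _
    · exact hup _ (by omega)
    · omega
  · split_ifs
    · omega
    · rw [show i.val = 0 by omega, hup0]
    · rfl

lemma sum_ite_val_eq {M : Type*} [AddCommMonoid M] (t : ℕ) (x : M) :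
    ∑ i : Fin c, (if i.val = t then x else 0) = if t < c then x else 0 := by
  rw [Fin.sum_univ_eq_sum_range (fun i => if i = t then x else 0), sum_ite_eq']
  simp only [mem_range]

lemma Ikappa_chainRates_mulVec_one_apply {down up F : ℕ → ℝ} (hF0 : F 0 = 0) (hFc : F c = 0)
    (hflux : ∀ t, down t - up t = F (t + 1)) (j : Fin c) :
    (Ikappa (chainRates down up) *ᵥ fun _ => 1) j = F (j.val + 1) - F j.val := by
  have hnet : ∀ i, chainRates down up i j - chainRates down up j i =
      (if i.val = j.val + 1 then F (j.val + 1) else 0) -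
        (if i.val = j.val - 1 then F j.val else 0) := fun i => by
    simp only [chainRates]
    -- at `j = 0` the truncated `j - 1` is `0`, harmless because `F 0 = 0`
    split_ifs <;> try omega
    · rw [hflux, sub_zero]
    · rw [show j.val = i.val + 1 by omega, ← hflux]; ring
    · rw [show j.val = 0 by omega, hF0]
    · ring
  rw [Ikappa_mulVec_apply]
  simp only [mul_one]
  rw [← sum_sub_distrib, sum_congr rfl fun i _ => hnet i, sum_sub_distrib, sum_ite_val_eq,
    sum_ite_val_eq, if_pos (by omega : j.val - 1 < c)]
  split_ifs with hj
  · rfl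
  · rw [show j.val + 1 = c by omega, hFc]

def prefixSum (h : Fin c → ℝ) (t : ℕ) : ℝ :=
  ∑ k ∈ univ.filter (fun k : Fin c => k.val < t), h k

lemma prefixSum_zero (h : Fin c → ℝ) : prefixSum h 0 = 0 := by
  simp [prefixSum]

lemma prefixSum_self (h : Fin c → ℝ) : prefixSum h c = ∑ k, h k := by
  simp [prefixSum]

lemma prefixSum_succ (h : Fin c → ℝ) (j : Fin c) :
    prefixSum h (j.val + 1) = prefixSum h j.val + h j := by
  have hins : univ.filter (fun k : Fin c => k.val < j.val + 1) =
      insert j (univ.filter fun k : Fin c => k.val < j.val) := by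
    ext k
    simp only [mem_filter, mem_univ, true_and, mem_insert, Fin.ext_iff]
    omega
  rw [prefixSum, hins, sum_insert (by simp), add_comm]
  rfl

lemma Ikappa_chainRates_mulVec_one {down up : ℕ → ℝ} {h : Fin c → ℝ} (hsum : ∑ k, h k = 0)
    (hflux : ∀ t, down t - up t = prefixSum h (t + 1)) :
    (Ikappa (chainRates down up) *ᵥ fun _ => 1) = h := by
  funext j
  rw [Ikappa_chainRates_mulVec_one_apply (prefixSum_zero h) ((prefixSum_self h).trans hsum)
    hflux, prefixSum_succ, add_sub_cancel_left]

def upRate (h : Fin c → ℝ) (t : ℕ) : ℝ :=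
  if t = 0 then 0 else 1 + |prefixSum h (t + 1)|

def balancedRates (h : Fin c → ℝ) : Fin c → Fin c → ℝ :=
  chainRates (fun t => upRate h t + prefixSum h (t + 1)) (upRate h)

lemma validK_balancedRates [NeZero c] {h : Fin c → ℝ} (h0 : 0 < h 0) :
    ValidK (chainR c) (balancedRates h) := by
  refine validK_chainRates (fun t => ?_) (if_pos rfl) (fun t ht => ?_)
  · rcases eq_or_ne t 0 with rfl | ht
    · have h1 : prefixSum h 1 = h 0 := by
        simpa only [Fin.val_zero, prefixSum_zero, zero_add] using prefixSum_succ h 0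
      rwa [upRate, if_pos rfl, zero_add, zero_add, h1]
    · simp only [upRate, if_neg ht]
      linarith [neg_abs_le (prefixSum h (t + 1))]
  · simp only [upRate, if_neg ht]
    positivity

end Chain

lemma sum_filter_one_le_val {M : Type*} [AddCommGroup M] {c : ℕ} [NeZero c] (h : Fin c → M) :
    ∑ i ∈ univ.filter (fun i : Fin c => 1 ≤ i.val), h i = ∑ i, h i - h 0 := by
  have : univ.filter (fun i : Fin c => 1 ≤ i.val) = univ.erase 0 := by
    ext i
    simp only [mem_filter, mem_univ, true_and, mem_erase, ne_eq, and_true, Fin.ext_iff,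
      Fin.val_zero]
    omega
  rw [this, sum_erase_eq_sub (mem_univ _)]

theorem stmt2 {n c : ℕ} (hc : 2 ≤ c)
    (B : Matrix (Fin n) (Fin c) ℕ)
    (hdef : ∀ κ : Fin c → Fin c → ℝ, ValidK (chainR c) κ → DeficiencyOneAt B κ)
    (h : Fin c → ℝ) (hh0 : h ≠ 0)
    (hker : (B.map (Nat.cast : ℕ → ℝ)).mulVec h = 0)
    (hran : ∀ κ : Fin c → Fin c → ℝ, ValidK (chainR c) κ →
      ∃ v : Fin c → ℝ, (Ikappa κ).mulVec v = h)
    (hCpp : ∑ i ∈ Finset.univ.filter (fun i : Fin c => 1 ≤ i.val), h i ≤ 0) :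
    (∃ κ : Fin c → Fin c → ℝ, ValidK (chainR c) κ ∧ EposNonempty B κ) ↔
      ∑ i ∈ Finset.univ.filter (fun i : Fin c => 1 ≤ i.val), h i < 0 := by
  have : NeZero c := ⟨by omega⟩
  have hsum : ∑ k, h k = 0 := by
    obtain ⟨v, hv⟩ := hran _ (validK_indicator _)
    rw [← hv, sum_Ikappa_mulVec_s2]
  rw [sum_filter_one_le_val, hsum, zero_sub] at hCpp ⊢
  constructor
  · rintro ⟨κ, hκ, x, hx, hss⟩
    obtain ⟨a, ha⟩ := exists_smul_eq_Ikappa_mulVec (hdef κ hκ) hh0 hker (hran κ hκ) hss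
    have hpos := Ikappa_mulVec_pos_of_sink hκ (Theta_pos B hx) (j := 0)
      (fun k => by simp [chainR_mem]) (i := ⟨1, by omega⟩) (by simp [chainR_mem])
    rw [← ha, Pi.smul_apply, smul_eq_mul] at hpos
    have hh_pos : 0 < h 0 := (neg_nonpos.mp hCpp).lt_of_ne fun h0 => by simp [← h0] at hpos
    linarith
  · intro hlt
    refine ⟨balancedRates h, validK_balancedRates (neg_lt_zero.mp hlt), fun _ => 1,
      fun _ => one_pos, ?_⟩
    rw [Theta_one, balancedRates,
      Ikappa_chainRates_mulVec_one hsum fun t => add_sub_cancel_left _ _, hker]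
end

section
/- Let (X,C,R) be a chemical reaction network whose graph of complexes is the chain with vertex set C = {1,…,c} and arc set R = {(i, i−1) : 2 ≤ i ≤ c} ∪ {(i, i+1) : 2 ≤ i ≤ c−1}, and whose deficiency satisfies δ = 1. Let h ∈ ℝ^c be a fixed vector with 0 ≠ h ∈ ker B ∩ ran I_κ and ∑_{i=2}^c h_i ≤ 0. Then E^κ_+ ≠ ∅ for all κ : R → ℝ_{>0} if and only if ∑_{i=2}^c h_i < 0 and ∑_{i=j}^c h_i ≤ 0 for all j ∈ {3,…,c}. -/
open Finset

/-!
Taking tail sums turns the steady-state equations of the chain into flux equations, one per edge: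
`∑_{k > i} (I_κ y)_k = κ_{i,i+1} y_i - κ_{i+1,i} y_{i+1}`, where `κ_{0,1} = 0` since complex `0`
is absorbing. By deficiency one, a positive steady state `y = Θ(x)` satisfies `I_κ y = μ h`, and
the flux across the edge `{0, 1}` forces `μ ∑_{i ≥ 1} h_i < 0`. Conversely, under the sign
conditions the flux equations can be solved edge by edge with a positive solution `w`, and
deficiency one also shows that `log w` lies in `ran Bᵀ + span {e₀, 𝟙}`, which makes a multiple
of `w` (modified at the absorbing complex) equal to some `Θ(x)`. If instead some
`∑_{i ≥ j} h_i > 0` with `j ≥ 2`, slowing down only the reaction `j - 1 → j` makes `y_j < 0`.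
-/

open Matrix

namespace ChainCRN

section TailSum

variable {c : ℕ}

def tailSum (v : Fin c → ℝ) (j : ℕ) : ℝ :=
  ∑ i ∈ univ.filter (fun i : Fin c => j ≤ i.val), v i

lemma tailSum_zero (v : Fin c → ℝ) : tailSum v 0 = ∑ i, v i := by
  simp [tailSum]

lemma tailSum_eq_zero_of_le (v : Fin c → ℝ) {j : ℕ} (hj : c ≤ j) : tailSum v j = 0 :=
  sum_eq_zero fun i hi => absurd ((mem_filter.1 hi).2.trans_lt i.isLt) (by omega)

lemma tailSum_eq_add (v : Fin c → ℝ) (i : Fin c) :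
    tailSum v i = v i + tailSum v (i.val + 1) := by
  have hT : univ.filter (fun k : Fin c => i.val ≤ k.val)
      = insert i (univ.filter fun k : Fin c => i.val + 1 ≤ k.val) := by
    ext k
    simp only [mem_filter, mem_univ, true_and, mem_insert, Fin.ext_iff]
    omega
  rw [tailSum, hT, sum_insert (by simp), tailSum]

lemma tailSum_smul (a : ℝ) (v : Fin c → ℝ) (j : ℕ) : tailSum (a • v) j = a * tailSum v j := by
  simp [tailSum, mul_sum]

lemma eq_of_tailSum_eq {v w : Fin c → ℝ} (H : ∀ j, tailSum v j = tailSum w j) : v = w :=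
  funext fun i => by linarith [tailSum_eq_add v i, tailSum_eq_add w i, H i, H (i.val + 1)]

lemma eq_of_sum_eq_of_tailSum_succ_eq {d : ℕ} {v w : Fin (d + 1) → ℝ}
    (h0 : ∑ i, v i = ∑ i, w i) (hs : ∀ i : Fin d, tailSum v (i.val + 1) = tailSum w (i.val + 1)) :
    v = w := by
  refine eq_of_tailSum_eq fun j => ?_
  rcases j with _ | j
  · simpa [tailSum_zero] using h0
  · by_cases hj : j < d
    · exact hs ⟨j, hj⟩
    · rw [tailSum_eq_zero_of_le v (by omega), tailSum_eq_zero_of_le w (by omega)]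

end TailSum

section Ikappa

variable {c : ℕ}

lemma mulVec_Ikappa_apply (κ : Fin c → Fin c → ℝ) (y : Fin c → ℝ) (k : Fin c) :
    (Ikappa κ *ᵥ y) k = ∑ i, κ i k * y i - (∑ l, κ k l) * y k := by
  simp only [Matrix.mulVec, dotProduct, Ikappa, Matrix.of_apply, ite_mul]
  rw [← add_sum_erase _ _ (mem_univ k), ← add_sum_erase _ _ (mem_univ k),
    ← add_sum_erase _ _ (mem_univ k), if_pos rfl,
    sum_congr rfl fun i hi => if_neg (ne_of_mem_erase hi).symm]
  ring

lemma sum_mulVec_Ikappa_eq (κ : Fin c → Fin c → ℝ) (y : Fin c → ℝ) (T : Finset (Fin c)) :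
    ∑ k ∈ T, (Ikappa κ *ᵥ y) k
      = ∑ i ∈ Tᶜ, ∑ k ∈ T, κ i k * y i - ∑ k ∈ T, ∑ l ∈ Tᶜ, κ k l * y k := by
  simp only [mulVec_Ikappa_apply, sum_sub_distrib, sum_mul]
  simp only [← sum_add_sum_compl T, sum_add_distrib]
  rw [sum_comm (s := T) (t := Tᶜ), sum_comm (s := T) (t := T)]
  ring

lemma sum_mulVec_Ikappa (κ : Fin c → Fin c → ℝ) (y : Fin c → ℝ) :
    ∑ k, (Ikappa κ *ᵥ y) k = 0 := by
  simpa using sum_mulVec_Ikappa_eq κ y univ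

end Ikappa

section Chain

lemma _root_.ValidK.chain_eq_zero {c : ℕ} {κ : Fin c → Fin c → ℝ} (hκ : ValidK (chainR c) κ)
    {a b : Fin c} (hab : ¬ (1 ≤ a.val ∧ (a.val = b.val + 1 ∨ b.val = a.val + 1))) : κ a b = 0 :=
  hκ.2 (a, b) (by simpa [chainR] using hab)

lemma _root_.ValidK.chain_pos {c : ℕ} {κ : Fin c → Fin c → ℝ} (hκ : ValidK (chainR c) κ)
    {a b : Fin c} (hab : 1 ≤ a.val ∧ (a.val = b.val + 1 ∨ b.val = a.val + 1)) : 0 < κ a b :=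
  hκ.1 (a, b) (by simpa [chainR] using hab)

variable {d : ℕ} {κ : Fin (d + 1) → Fin (d + 1) → ℝ}

lemma _root_.ValidK.zero_apply (hκ : ValidK (chainR (d + 1)) κ) (b : Fin (d + 1)) : κ 0 b = 0 :=
  hκ.chain_eq_zero (by simp)

lemma _root_.ValidK.backward_pos (hκ : ValidK (chainR (d + 1)) κ) (i : Fin d) :
    0 < κ i.succ i.castSucc :=
  hκ.chain_pos (by simp)

lemma _root_.ValidK.forward_pos (hκ : ValidK (chainR (d + 1)) κ) {i : Fin d} (hi : 0 < i.val) :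
    0 < κ i.castSucc i.succ :=
  hκ.chain_pos (by simp; omega)

/-- The net flow into `{i + 1, …, d}` passes through the single edge between `i` and `i + 1`. -/
lemma tailSum_mulVec_Ikappa_succ (hκ : ValidK (chainR (d + 1)) κ) (y : Fin (d + 1) → ℝ)
    (i : Fin d) :
    tailSum (Ikappa κ *ᵥ y) (i.val + 1)
      = κ i.castSucc i.succ * y i.castSucc - κ i.succ i.castSucc * y i.succ := by
  rw [tailSum, sum_mulVec_Ikappa_eq]
  congr 1 <;> [
    rw [sum_eq_single_of_mem i.castSucc (by simp) fun a ha hne => sum_eq_zero fun b hb => ?_,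
      sum_eq_single_of_mem i.succ (by simp) fun b hb hne => ?_];
    rw [sum_eq_single_of_mem i.succ (by simp) fun a ha hne => sum_eq_zero fun b hb => ?_,
      sum_eq_single_of_mem i.castSucc (by simp) fun b hb hne => ?_]] <;>
  · rw [hκ.chain_eq_zero, zero_mul]
    simp only [mem_filter, mem_compl, mem_univ, true_and, not_le, ne_eq, Fin.ext_iff,
      Fin.val_succ, Fin.val_castSucc] at *
    omega

lemma mulVec_Ikappa_single_zero (hκ : ValidK (chainR (d + 1)) κ) :
    Ikappa κ *ᵥ Pi.single 0 1 = 0 := by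
  ext k
  simp [Ikappa, hκ.zero_apply]

lemma mulVec_Ikappa_congr (hκ : ValidK (chainR (d + 1)) κ) {y y' : Fin (d + 1) → ℝ}
    (hyy : ∀ i, i ≠ 0 → y i = y' i) : Ikappa κ *ᵥ y = Ikappa κ *ᵥ y' := by
  have hy : y = y' + (y 0 - y' 0) • Pi.single 0 1 := funext fun i => by
    rcases eq_or_ne i 0 with rfl | hi
    · simp
    · simp [hyy i hi, hi]
  rw [hy, mulVec_add, mulVec_smul, mulVec_Ikappa_single_zero hκ, smul_zero, add_zero]

-- Solves the flux equations of `I_κ v = g` edge by edge, starting from `v 0 = a`.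
noncomputable def chainSolve (κ : Fin (d + 1) → Fin (d + 1) → ℝ) (g : Fin (d + 1) → ℝ) (a : ℝ) :
    Fin (d + 1) → ℝ :=
  Fin.induction a fun i v => (κ i.castSucc i.succ * v - tailSum g (i.val + 1)) / κ i.succ i.castSucc

lemma chainSolve_succ (g : Fin (d + 1) → ℝ) (a : ℝ) (i : Fin d) :
    chainSolve κ g a i.succ
      = (κ i.castSucc i.succ * chainSolve κ g a i.castSucc - tailSum g (i.val + 1))
        / κ i.succ i.castSucc :=
  Fin.induction_succ _ _ i

lemma mulVec_Ikappa_chainSolve (hκ : ValidK (chainR (d + 1)) κ) {g : Fin (d + 1) → ℝ}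
    (hg : ∑ i, g i = 0) (a : ℝ) : Ikappa κ *ᵥ chainSolve κ g a = g := by
  refine eq_of_sum_eq_of_tailSum_succ_eq (by rw [sum_mulVec_Ikappa, hg]) fun i => ?_
  rw [tailSum_mulVec_Ikappa_succ hκ, chainSolve_succ, mul_div_cancel₀ _ (hκ.backward_pos i).ne']
  ring

lemma chainSolve_pos (hκ : ValidK (chainR (d + 1)) κ) {g : Fin (d + 1) → ℝ}
    (hg₁ : tailSum g 1 < 0) (hg : ∀ j : Fin (d + 1), 2 ≤ j.val → tailSum g j ≤ 0)
    {a : ℝ} (ha : 0 < a) (i : Fin (d + 1)) : 0 < chainSolve κ g a i := by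
  induction i using Fin.induction with
  | zero => exact ha
  | succ i ih =>
    rw [chainSolve_succ]
    refine div_pos ?_ (hκ.backward_pos i)
    rcases Nat.eq_zero_or_pos i.val with hi | hi
    · have hi0 : i.castSucc = 0 := Fin.ext hi
      rw [hi0, hκ.zero_apply, hi]
      linarith
    · have := hg i.succ (by simp; omega)
      have := mul_pos (hκ.forward_pos hi) ih
      simp only [Fin.val_succ] at *
      linarith

end Chain

section Deficiency

lemma exists_eq_smul_of_finrank_eq_one {K V : Type*} [Field K] [AddCommGroup V] [Module K V]
    {W : Submodule K V} (hW : Module.finrank K W = 1) {h z : V} (hh : h ∈ W) (hh0 : h ≠ 0)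
    (hz : z ∈ W) : ∃ a : K, z = a • h := by
  obtain ⟨a, ha⟩ := (finrank_eq_one_iff_of_nonzero' (⟨h, hh⟩ : W) (by simpa)).1 hW ⟨z, hz⟩
  exact ⟨a, congrArg Subtype.val ha.symm⟩

variable {n c : ℕ} {B : Matrix (Fin n) (Fin c) ℕ} {κ : Fin c → Fin c → ℝ} {h : Fin c → ℝ}

lemma exists_eq_smul_of_deficiencyOneAt (hdef : DeficiencyOneAt B κ) (hh0 : h ≠ 0)
    (hker : B.map (Nat.cast : ℕ → ℝ) *ᵥ h = 0) (hran : ∃ v, Ikappa κ *ᵥ v = h) {z : Fin c → ℝ}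
    (hzB : B.map (Nat.cast : ℕ → ℝ) *ᵥ z = 0) (hzI : ∃ v, Ikappa κ *ᵥ v = z) :
    ∃ a : ℝ, z = a • h :=
  exists_eq_smul_of_finrank_eq_one hdef ⟨hker, hran⟩ hh0 ⟨hzB, hzI⟩

lemma exists_steady_of_eposNonempty (hdef : DeficiencyOneAt B κ) (hh0 : h ≠ 0)
    (hker : B.map (Nat.cast : ℕ → ℝ) *ᵥ h = 0) (hran : ∃ v, Ikappa κ *ᵥ v = h)
    (hE : EposNonempty B κ) : ∃ y : Fin c → ℝ, (∀ i, 0 < y i) ∧ ∃ μ : ℝ, Ikappa κ *ᵥ y = μ • h := by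
  obtain ⟨x, hx, hst⟩ := hE
  obtain ⟨μ, hμ⟩ := exists_eq_smul_of_deficiencyOneAt hdef hh0 hker hran hst ⟨_, rfl⟩
  exact ⟨Theta B x, fun i => prod_pos fun s _ => pow_pos (hx s) _, μ, hμ⟩

end Deficiency

/-- A functional vanishing on the left-hand side is `z ⬝ᵥ ·` with `A z = 0`, `∑ z = 0` and
`z i₀ = 0`, so `z` is a multiple of `h` vanishing at `i₀`. -/
lemma range_transpose_sup_span_eq_top {m ι : Type*} [Fintype m] [Fintype ι] [DecidableEq ι]
    (A : Matrix m ι ℝ) (i₀ : ι) {h : ι → ℝ} (hh : h i₀ ≠ 0)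
    (hker : ∀ z, A *ᵥ z = 0 → ∑ i, z i = 0 → ∃ a : ℝ, z = a • h) :
    LinearMap.range Aᵀ.mulVecLin ⊔ Submodule.span ℝ {Pi.single i₀ 1, 1} = ⊤ := by
  by_contra hne
  obtain ⟨f, hf0, hle⟩ := Submodule.exists_le_ker_of_lt_top _ (lt_top_iff_ne_top.2 hne)
  obtain ⟨z, rfl⟩ := (dotProductEquiv ℝ ι).surjective f
  have hvan : ∀ v ∈ LinearMap.range Aᵀ.mulVecLin ⊔ Submodule.span ℝ {Pi.single i₀ 1, 1},
      z ⬝ᵥ v = 0 := fun v hv => hle hv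
  have hAz : A *ᵥ z = 0 := by
    have := hvan _ (Submodule.mem_sup_left (LinearMap.mem_range_self _ (A *ᵥ z)))
    rwa [mulVecLin_apply, dotProduct_mulVec, vecMul_transpose, dotProduct_self_eq_zero] at this
  have hz₀ : z i₀ = 0 := by
    simpa using hvan _ (Submodule.mem_sup_right (Submodule.subset_span (Set.mem_insert _ _)))
  have hsum : ∑ i, z i = 0 := by
    simpa [dotProduct] using
      hvan 1 (Submodule.mem_sup_right (Submodule.subset_span (Set.mem_insert_of_mem _ rfl)))
  obtain ⟨a, rfl⟩ := hker z hAz hsum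
  have ha : a = 0 := by simpa [hh] using hz₀
  exact hf0 (by simp [ha])

lemma theta_exp {n c : ℕ} (B : Matrix (Fin n) (Fin c) ℕ) (u : Fin n → ℝ) (i : Fin c) :
    Theta B (fun s => Real.exp (u s)) i = Real.exp (((B.map (Nat.cast : ℕ → ℝ))ᵀ *ᵥ u) i) := by
  simp [Theta, mulVec, dotProduct, Real.exp_sum, ← Real.exp_nat_mul]

section Sufficiency

variable {n d : ℕ} {B : Matrix (Fin n) (Fin (d + 1)) ℕ} {κ : Fin (d + 1) → Fin (d + 1) → ℝ}
  {h : Fin (d + 1) → ℝ}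

/-- `w := chainSolve κ h 1` is a positive solution of `I_κ w = h`; writing `log w` as
`Bᵀ u + a e₀ + b 𝟙`, the point `x = exp u` has `Θ(x) = e^{-b} w` off the absorbing complex `0`. -/
lemma eposNonempty_of_tailSum (hκ : ValidK (chainR (d + 1)) κ) (hdef : DeficiencyOneAt B κ)
    (hh0 : h ≠ 0) (hker : B.map (Nat.cast : ℕ → ℝ) *ᵥ h = 0) (hran : ∃ v, Ikappa κ *ᵥ v = h)
    (h₁ : tailSum h 1 < 0) (h₂ : ∀ j : Fin (d + 1), 2 ≤ j.val → tailSum h j ≤ 0) :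
    EposNonempty B κ := by
  have hsum : ∑ i, h i = 0 := by
    obtain ⟨v, rfl⟩ := hran
    exact sum_mulVec_Ikappa κ v
  have hh₀ : h 0 ≠ 0 := by
    have := tailSum_eq_add h 0
    rw [Fin.val_zero, tailSum_zero, hsum, zero_add] at this
    linarith
  set w := chainSolve κ h 1
  have hw : ∀ i, 0 < w i := chainSolve_pos hκ h₁ h₂ one_pos
  have htop := range_transpose_sup_span_eq_top (B.map (Nat.cast : ℕ → ℝ)) 0 hh₀
    fun z hzB hzs => exists_eq_smul_of_deficiencyOneAt hdef hh0 hker hran hzB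
      ⟨_, mulVec_Ikappa_chainSolve hκ hzs 0⟩
  obtain ⟨_, ⟨u, rfl⟩, _, hab, hlog⟩ :=
    Submodule.mem_sup.1 (htop ▸ Submodule.mem_top (x := fun i => Real.log (w i)))
  obtain ⟨a, b, rfl⟩ := Submodule.mem_span_pair.1 hab
  have hΘ : Ikappa κ *ᵥ Theta B (fun s => Real.exp (u s)) = Ikappa κ *ᵥ (Real.exp (-b) • w) := by
    refine mulVec_Ikappa_congr hκ fun i hi => ?_
    have hlog_i := congrFun hlog i
    simp only [Pi.add_apply, Pi.smul_apply, Pi.single_apply, hi, if_false, smul_eq_mul,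
      mul_zero, zero_add, Pi.one_apply, mul_one, mulVecLin_apply] at hlog_i
    rw [theta_exp, Pi.smul_apply, smul_eq_mul, eq_sub_of_add_eq hlog_i, Real.exp_sub,
      Real.exp_log (hw i), Real.exp_neg]
    ring
  refine ⟨fun s => Real.exp (u s), fun s => Real.exp_pos _, ?_⟩
  rw [hΘ, mulVec_smul, mulVec_Ikappa_chainSolve hκ hsum, mulVec_smul, hker, smul_zero]

end Sufficiency

section Necessity

def chainRates (c : ℕ) (f : Fin c → ℝ) : Fin c → Fin c → ℝ :=
  fun a b => if (a, b) ∈ chainR c then (if b.val = a.val + 1 then f b else 1) else 0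

lemma chainRates_validK {c : ℕ} {f : Fin c → ℝ} (hf : ∀ b, 0 < f b) :
    ValidK (chainR c) (chainRates c f) := by
  refine ⟨fun p hp => ?_, fun p hp => if_neg hp⟩
  simp only [chainRates, if_pos hp]
  split_ifs
  exacts [hf _, one_pos]

variable {d : ℕ}

lemma chainRates_succ_castSucc (f : Fin (d + 1) → ℝ) (i : Fin d) :
    chainRates (d + 1) f i.succ i.castSucc = 1 := by
  simp [chainRates, chainR, show i.val ≠ i.val + 1 + 1 by omega]

lemma chainRates_castSucc_succ (f : Fin (d + 1) → ℝ) {i : Fin d} (hi : 0 < i.val) :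
    chainRates (d + 1) f i.castSucc i.succ = f i.succ := by
  simp [chainRates, chainR]
  omega

variable {h : Fin (d + 2) → ℝ} {κ : Fin (d + 2) → Fin (d + 2) → ℝ} {y : Fin (d + 2) → ℝ}
  {μ : ℝ}

lemma tailSum_one_neg_of_steady (hκ : ValidK (chainR (d + 2)) κ) (hy : ∀ i, 0 < y i)
    (hyh : Ikappa κ *ᵥ y = μ • h) (hle : tailSum h 1 ≤ 0) : tailSum h 1 < 0 ∧ 0 < μ := by
  have hflux := tailSum_mulVec_Ikappa_succ hκ y 0
  rw [hyh, tailSum_smul, Fin.castSucc_zero, hκ.zero_apply, Fin.succ_zero_eq_one, Fin.val_zero,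
    zero_add] at hflux
  have hneg : μ * tailSum h 1 < 0 := by
    have hb : 0 < κ 1 0 := by simpa using hκ.backward_pos 0
    rw [hflux, zero_mul, zero_sub, neg_neg_iff_pos]
    exact mul_pos hb (hy 1)
  have hlt : tailSum h 1 < 0 := lt_of_le_of_ne hle fun h0 => by simp [h0] at hneg
  exact ⟨hlt, pos_of_mul_neg_left hneg hle⟩

/-- If `S := tailSum h j > 0`, slow down only the reaction `j - 1 → j`, to the rate `ε`. Below `j`
all rates are `1`, so the flux equations telescope to `y (j - 1) = μ A` with `A` independent of
`ε`, and then `y j = μ (ε A - S) < 0` once `ε |A| < S`. -/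
lemma tailSum_nonpos_of_steady {j : Fin (d + 2)} (hj : 2 ≤ j.val)
    (hsteady : ∀ f : Fin (d + 2) → ℝ, (∀ b, 0 < f b) →
      ∃ y : Fin (d + 2) → ℝ, (∀ i, 0 < y i) ∧ ∃ μ : ℝ, 0 < μ ∧
        Ikappa (chainRates (d + 2) f) *ᵥ y = μ • h) :
    tailSum h j ≤ 0 := by
  by_contra! hS
  obtain ⟨i, rfl⟩ := Fin.exists_succ_eq.2 (fun h0 => by simp [h0] at hj : j ≠ 0)
  simp only [Fin.val_succ] at hj hS
  set A := -∑ m ∈ Icc 1 i.val, tailSum h m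
  set ε := tailSum h (i.val + 1) / (|A| + 1)
  have hε : 0 < ε := by positivity
  have hf : ∀ b, 0 < Function.update (1 : Fin (d + 2) → ℝ) i.succ ε b := fun b => by
    rcases eq_or_ne b i.succ with rfl | hb
    · simpa using hε
    · simp [hb]
  obtain ⟨y, hy, μ, hμ, hyh⟩ := hsteady _ hf
  have hflux (k : Fin (d + 1)) := tailSum_mulVec_Ikappa_succ (chainRates_validK hf) y k
  simp only [hyh, tailSum_smul, chainRates_succ_castSucc, one_mul] at hflux
  have htele : ∀ k : Fin (d + 2), 0 < k.val → k.val ≤ i.val →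
      y k = -μ * ∑ m ∈ Icc 1 k.val, tailSum h m := by
    intro k
    induction k using Fin.induction with
    | zero => simp
    | succ k ih =>
      intro _ hk
      rw [Fin.val_succ] at hk
      have hfk := hflux k
      rcases Nat.eq_zero_or_pos k.val with hk0 | hk0
      · rw [show k.castSucc = 0 from Fin.ext hk0, (chainRates_validK hf).zero_apply, hk0,
          zero_add] at hfk
        rw [Fin.val_succ, hk0, zero_add, Icc_self, sum_singleton]
        linarith
      · rw [chainRates_castSucc_succ _ hk0, Function.update_of_ne
          (Fin.ne_of_val_ne (by simp only [Fin.val_succ]; omega)), Pi.one_apply, one_mul,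
          ih hk0 (by simp only [Fin.val_castSucc]; omega)] at hfk
        rw [Fin.val_succ, sum_Icc_succ_top (by omega)]
        simp only [Fin.val_castSucc] at hfk
        linarith
  have hi : 0 < i.val := by omega
  have hfi := hflux i
  rw [chainRates_castSucc_succ _ hi, Function.update_self,
    htele i.castSucc hi le_rfl] at hfi
  have hεA : ε * A < tailSum h (i.val + 1) := by
    calc ε * A ≤ ε * |A| := mul_le_mul_of_nonneg_left (le_abs_self A) hε.le
      _ < ε * (|A| + 1) := by linarith
      _ = tailSum h (i.val + 1) := div_mul_cancel₀ _ (by positivity)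
  have : y i.succ = μ * (ε * A - tailSum h (i.val + 1)) := by
    simp only [Fin.val_castSucc] at hfi
    linarith
  nlinarith [hy i.succ]

end Necessity

end ChainCRN

open ChainCRN

theorem stmt3 {n c : ℕ} (hc : 2 ≤ c)
    (B : Matrix (Fin n) (Fin c) ℕ)
    (hdef : ∀ κ : Fin c → Fin c → ℝ, ValidK (chainR c) κ → DeficiencyOneAt B κ)
    (h : Fin c → ℝ) (hh0 : h ≠ 0)
    (hker : (B.map (Nat.cast : ℕ → ℝ)).mulVec h = 0)
    (hran : ∀ κ : Fin c → Fin c → ℝ, ValidK (chainR c) κ →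
      ∃ v : Fin c → ℝ, (Ikappa κ).mulVec v = h)
    (hCpp : ∑ i ∈ Finset.univ.filter (fun i : Fin c => 1 ≤ i.val), h i ≤ 0) :
    (∀ κ : Fin c → Fin c → ℝ, ValidK (chainR c) κ → EposNonempty B κ) ↔
      (∑ i ∈ Finset.univ.filter (fun i : Fin c => 1 ≤ i.val), h i < 0 ∧
        ∀ j : Fin c, 2 ≤ j.val →
          ∑ i ∈ Finset.univ.filter (fun i : Fin c => j.val ≤ i.val), h i ≤ 0) := by
  obtain ⟨d, rfl⟩ : ∃ d, c = d + 2 := ⟨c - 2, by omega⟩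
  constructor
  · intro hE
    have hsteady : ∀ κ, ValidK (chainR (d + 2)) κ → tailSum h 1 < 0 ∧
        ∃ y : Fin (d + 2) → ℝ, (∀ i, 0 < y i) ∧ ∃ μ : ℝ, 0 < μ ∧ Ikappa κ *ᵥ y = μ • h := by
      intro κ hκ
      obtain ⟨y, hy, μ, hyh⟩ :=
        exists_steady_of_eposNonempty (hdef κ hκ) hh0 hker (hran κ hκ) (hE κ hκ)
      obtain ⟨h₁, hμ⟩ := tailSum_one_neg_of_steady hκ hy hyh hCpp
      exact ⟨h₁, y, hy, μ, hμ, hyh⟩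
    exact ⟨(hsteady _ (chainRates_validK fun _ => one_pos)).1, fun j hj =>
      tailSum_nonpos_of_steady hj fun f hf => (hsteady _ (chainRates_validK hf)).2⟩
  · rintro ⟨h₁, h₂⟩ κ hκ
    exact eposNonempty_of_tailSum hκ (hdef κ hκ) hh0 hker (hran κ hκ) h₁ h₂
end

section
/- Let (V,A) be a weakly connected directed graph and let h : V → ℝ be a function with ∑_{v ∈ V} h(v) = 0. Then there exists a function z : A → ℝ_{>0} with excess_z({v}) = h(v) for every v ∈ V if and only if h(U) < 0 for every nonempty proper subset U ⊊ V with ϱ^in(U) = ∅ (where h(U) = ∑_{v ∈ U} h(v)). -/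
open Finset

variable {V : Type*}

/-- The set of arcs of `A` entering the vertex set `U`. -/
def arcsIn [DecidableEq V] (A : Finset (V × V)) (U : Finset V) : Finset (V × V) :=
  A.filter (fun a => a.1 ∉ U ∧ a.2 ∈ U)

/-- The set of arcs of `A` leaving the vertex set `U`. -/
def arcsOut [DecidableEq V] (A : Finset (V × V)) (U : Finset V) : Finset (V × V) :=
  A.filter (fun a => a.1 ∈ U ∧ a.2 ∉ U)

/-- The excess function associated to the directed graph `(V, A)` and `z : A → ℝ`. -/
noncomputable def excess [DecidableEq V] (A : Finset (V × V)) (z : V → V → ℝ)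
    (U : Finset V) : ℝ :=
  ∑ a ∈ arcsIn A U, z a.1 a.2 - ∑ a ∈ arcsOut A U, z a.1 a.2

set_option linter.unusedSectionVars false
section Aux
variable [Fintype V] [DecidableEq V]



lemma excess_eq (A : Finset (V × V)) (z : V → V → ℝ) (U : Finset V) :
    excess A z U
      = ∑ a ∈ A, ((if a.2 ∈ U then z a.1 a.2 else 0) - (if a.1 ∈ U then z a.1 a.2 else 0)) := by
  unfold excess arcsIn arcsOut
  rw [Finset.sum_filter, Finset.sum_filter, ← Finset.sum_sub_distrib]
  refine Finset.sum_congr rfl fun a _ => ?_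
  by_cases h1 : a.1 ∈ U <;> by_cases h2 : a.2 ∈ U <;> simp [h1, h2]

lemma sum_excess_singleton (A : Finset (V × V)) (z : V → V → ℝ) (U : Finset V) :
    ∑ v ∈ U, excess A z {v} = excess A z U := by
  rw [excess_eq]
  simp only [excess_eq, Finset.mem_singleton]
  rw [Finset.sum_comm]
  refine Finset.sum_congr rfl fun a _ => ?_
  rw [Finset.sum_sub_distrib]
  congr 1 <;> simp [Finset.sum_ite_eq]

lemma excess_singleton_eq_dvg (A : Finset (V × V)) (z : V → V → ℝ)
    (hz : ∀ x y, (x, y) ∉ A → z x y = 0) (v : V) :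
    excess A z {v} = (∑ x, z x v) - ∑ y, z v y := by
  rw [excess_eq]
  rw [Finset.sum_sub_distrib]
  congr 1
  · rw [Finset.sum_subset (Finset.subset_univ A) (fun a _ ha => by simp [hz a.1 a.2 ha])]
    rw [Fintype.sum_prod_type]
    simp only [Finset.mem_singleton]
    rw [Finset.sum_comm]
    simp [Finset.sum_ite_eq]
  · rw [Finset.sum_subset (Finset.subset_univ A) (fun a _ ha => by simp [hz a.1 a.2 ha])]
    rw [Fintype.sum_prod_type]
    simp [Finset.sum_ite_eq, Finset.mem_singleton]




lemma single_arc_flow (x y : V) (hxy : x ≠ y) (δ : ℝ) (u : V) :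
    ((∑ s : V, if (s, u) = (x, y) then δ else 0) - ∑ t : V, if (u, t) = (x, y) then δ else 0)
      = δ * ((if u = y then 1 else 0) - (if u = x then 1 else 0)) := by
  have h1 : (∑ s : V, if (s, u) = (x, y) then δ else 0) = if u = y then δ else 0 := by
    by_cases hu : u = y
    · subst hu; simp [Prod.ext_iff, Finset.sum_ite_eq]
    · simp [Prod.ext_iff, hu]
  have h2 : (∑ t : V, if (u, t) = (x, y) then δ else 0) = if u = x then δ else 0 := by
    by_cases hu : u = x
    · subst hu; simp [Prod.ext_iff, Finset.sum_ite_eq]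
    · simp [Prod.ext_iff, hu]
  rw [h1, h2]
  split_ifs with hA hB'
  · exact absurd (hB'.symm.trans hA) hxy
  all_goals ring

lemma exists_path_flow (B : Finset (V × V)) (hB : ∀ a ∈ B, a.1 ≠ a.2)
    (δ : ℝ) (hδ : 0 ≤ δ) (v : V) :
    ∀ w, Relation.ReflTransGen (fun x y => (x, y) ∈ B) w v →
      ∃ p : V → V → ℝ, (∀ x y, 0 ≤ p x y) ∧ (∀ x y, (x, y) ∉ B → p x y = 0) ∧
        ∀ u, ((∑ x, p x u) - ∑ y, p u y)
          = δ * ((if u = v then 1 else 0) - (if u = w then 1 else 0)) := by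
  intro w hw
  induction hw using Relation.ReflTransGen.head_induction_on with
  | refl => exact ⟨0, fun _ _ => le_refl 0, fun _ _ _ => rfl, fun u => by simp⟩
  | @head w c hwc _ ih =>
    obtain ⟨p, hp0, hpsupp, hpdiv⟩ := ih
    refine ⟨fun x y => p x y + (if (x, y) = (w, c) then δ else 0), ?_, ?_, ?_⟩
    · intro x y; have := hp0 x y; positivity
    · intro x y hxy
      have hne : (x, y) ≠ (w, c) := fun he => hxy (by rw [he]; exact hwc)
      simp [hpsupp x y hxy, hne]
    · intro u
      rw [Finset.sum_add_distrib, Finset.sum_add_distrib]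
      have := single_arc_flow w c (hB _ hwc) δ u
      have hd := hpdiv u
      by_cases h1 : u = v <;> by_cases h2 : u = w <;> by_cases h3 : u = c <;>
        · simp only [h1, h2, h3] at *
          linarith



/-- Hypotheses of Gale's flow feasibility theorem on vertex set `S`. -/
def GaleHyp (S : Finset V) (B : Finset (V × V)) (g : V → ℝ) : Prop :=
  (∀ a ∈ B, a.1 ∈ S ∧ a.2 ∈ S ∧ a.1 ≠ a.2) ∧
  (∀ v, v ∉ S → g v = 0) ∧
  (∑ v ∈ S, g v = 0) ∧
  (∀ U ⊆ S, (∀ a ∈ B, a.2 ∈ U → a.1 ∈ U) → ∑ v ∈ U, g v ≤ 0)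

/-- A nonnegative flow supported on `B` with divergence `g`. -/
def GaleSol (B : Finset (V × V)) (g : V → ℝ) (f : V → V → ℝ) : Prop :=
  (∀ x y, 0 ≤ f x y) ∧ (∀ x y, (x, y) ∉ B → f x y = 0) ∧
    ∀ v, ((∑ x, f x v) - ∑ y, f v y) = g v

lemma gale_zero (B : Finset (V × V)) (g : V → ℝ) (hg0 : ∀ v, g v = 0) :
    ∃ f, GaleSol B g f :=
  ⟨fun _ _ => 0, fun _ _ => le_rfl, fun _ _ _ => rfl, fun v => by simp [hg0 v]⟩

lemma gale_split (S : Finset V) (B : Finset (V × V)) (g : V → ℝ) (hh : GaleHyp S B g)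
    (U : Finset V) (hUS : U ⊆ S) (hUcl : ∀ a ∈ B, a.2 ∈ U → a.1 ∈ U)
    (hUne : U.Nonempty) (hUneS : U ≠ S) (hUt : ∑ v ∈ U, g v = 0)
    (IH : ∀ (S' : Finset V) (B' : Finset (V × V)) (g' : V → ℝ),
      S'.card < S.card → GaleHyp S' B' g' → ∃ f, GaleSol B' g' f) :
    ∃ f, GaleSol B g f := by
  classical
  obtain ⟨harc, hsupp, hsum, hcut⟩ := hh
  set B1 := B.filter (fun a => a.1 ∈ U ∧ a.2 ∈ U) with hB1
  set B2 := B.filter (fun a => a.1 ∉ U ∧ a.2 ∉ U) with hB2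
  set g1 : V → ℝ := fun v => if v ∈ U then g v else 0 with hg1
  set g2 : V → ℝ := fun v => if v ∈ U then 0 else g v with hg2
  have hUsum : ∑ v ∈ U, g1 v = 0 := by
    rw [← hUt]; exact Finset.sum_congr rfl fun v hv => by simp [hg1, hv]
  have hcard1 : U.card < S.card := Finset.card_lt_card (hUS.ssubset_of_ne hUneS)
  have hcard2 : (S \ U).card < S.card := by
    have h1 : (S \ U).card ≤ S.card - U.card := by
      rw [Finset.card_sdiff_of_subset hUS]
    have h2 : 0 < U.card := Finset.card_pos.mpr hUne
    have := Finset.card_le_card hUS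
    omega
  have hh1 : GaleHyp U B1 g1 := by
    refine ⟨?_, ?_, hUsum, ?_⟩
    · intro a ha
      rw [hB1, Finset.mem_filter] at ha
      exact ⟨ha.2.1, ha.2.2, (harc a ha.1).2.2⟩
    · intro v hv; simp [hg1, hv]
    · intro W hWU hWcl
      have : ∑ v ∈ W, g1 v = ∑ v ∈ W, g v :=
        Finset.sum_congr rfl fun v hv => by simp [hg1, hWU hv]
      rw [this]
      refine hcut W (hWU.trans hUS) ?_
      intro a ha ha2
      have ha1U : a.1 ∈ U := hUcl a ha (hWU ha2)
      exact hWcl a (by rw [hB1, Finset.mem_filter]; exact ⟨ha, ha1U, hWU ha2⟩) ha2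
  have hh2 : GaleHyp (S \ U) B2 g2 := by
    refine ⟨?_, ?_, ?_, ?_⟩
    · intro a ha
      rw [hB2, Finset.mem_filter] at ha
      obtain ⟨h1, h2, h3⟩ := harc a ha.1
      exact ⟨Finset.mem_sdiff.mpr ⟨h1, ha.2.1⟩, Finset.mem_sdiff.mpr ⟨h2, ha.2.2⟩, h3⟩
    · intro v hv
      rw [Finset.mem_sdiff] at hv
      push_neg at hv
      by_cases hvU : v ∈ U
      · simp [hg2, hvU]
      · simp [hg2, hvU, hsupp v (fun hvS => hvU (hv hvS))]
    · have : ∑ v ∈ S \ U, g2 v = ∑ v ∈ S \ U, g v :=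
        Finset.sum_congr rfl fun v hv => by simp [hg2, (Finset.mem_sdiff.mp hv).2]
      rw [this, Finset.sum_sdiff_eq_sub hUS, hsum, hUt, sub_zero]
    · intro W hWSU hWcl
      have hWU : ∀ v ∈ W, v ∉ U := fun v hv => (Finset.mem_sdiff.mp (hWSU hv)).2
      have hdisj : Disjoint W U := Finset.disjoint_left.mpr hWU
      have hWUcl : ∀ a ∈ B, a.2 ∈ W ∪ U → a.1 ∈ W ∪ U := by
        intro a ha ha2
        rw [Finset.mem_union] at ha2 ⊢
        rcases ha2 with h2W | h2U
        · by_cases h1U : a.1 ∈ U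
          · exact Or.inr h1U
          · refine Or.inl (hWcl a ?_ h2W)
            rw [hB2, Finset.mem_filter]
            exact ⟨ha, h1U, hWU _ h2W⟩
        · exact Or.inr (hUcl a ha h2U)
      have hle := hcut (W ∪ U) (Finset.union_subset (hWSU.trans (Finset.sdiff_subset)) hUS) hWUcl
      rw [Finset.sum_union hdisj, hUt, add_zero] at hle
      calc ∑ v ∈ W, g2 v = ∑ v ∈ W, g v :=
            Finset.sum_congr rfl fun v hv => by simp [hg2, hWU v hv]
        _ ≤ 0 := hle
  obtain ⟨f1, hf1pos, hf1supp, hf1div⟩ := IH U B1 g1 hcard1 hh1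
  obtain ⟨f2, hf2pos, hf2supp, hf2div⟩ := IH (S \ U) B2 g2 hcard2 hh2
  refine ⟨fun x y => f1 x y + f2 x y, fun x y => add_nonneg (hf1pos x y) (hf2pos x y), ?_, ?_⟩
  · intro x y hxy
    have h1 : (x, y) ∉ B1 := fun hm => hxy (Finset.mem_filter.mp hm).1
    have h2 : (x, y) ∉ B2 := fun hm => hxy (Finset.mem_filter.mp hm).1
    show f1 x y + f2 x y = 0
    rw [hf1supp x y h1, hf2supp x y h2, add_zero]
  · intro v
    rw [Finset.sum_add_distrib, Finset.sum_add_distrib]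
    have d1 := hf1div v
    have d2 := hf2div v
    by_cases hvU : v ∈ U
    · have e1 : g1 v = g v := by simp [hg1, hvU]
      have e2 : g2 v = (0 : ℝ) := by simp [hg2, hvU]
      rw [e1] at d1; rw [e2] at d2; linarith
    · have e1 : g1 v = (0 : ℝ) := by simp [hg1, hvU]
      have e2 : g2 v = g v := by simp [hg2, hvU]
      rw [e1] at d1; rw [e2] at d2; linarith

open Classical in
lemma gale_aux : ∀ (n m : ℕ) (S : Finset V) (B : Finset (V × V)) (g : V → ℝ),
    S.card ≤ n → (univ.filter fun v => g v ≠ 0).card ≤ m → GaleHyp S B g →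
    ∃ f, GaleSol B g f := by
  intro n
  induction n with
  | zero =>
    intro m S B g hSn _ hh
    have hS : S = ∅ := Finset.card_eq_zero.mp (Nat.le_zero.mp hSn)
    exact gale_zero B g fun v => hh.2.1 v (by simp [hS])
  | succ n ihn =>
    intro m
    induction m with
    | zero =>
      intro S B g _ hgm hh
      refine gale_zero B g fun v => ?_
      by_contra hv
      have h1 : v ∈ univ.filter fun v => g v ≠ 0 := by simp [hv]
      have := Finset.card_pos.mpr ⟨v, h1⟩
      omega
    | succ m ihm =>
      intro S B g hSn hgm hh
      obtain ⟨harc, hsupp, hsum, hcut⟩ := hh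
      by_cases hg0 : ∀ v, g v = 0
      · exact gale_zero B g hg0
      have IHsplit : ∀ (S' : Finset V) (B' : Finset (V × V)) (g' : V → ℝ),
          S'.card < S.card → GaleHyp S' B' g' → ∃ f, GaleSol B' g' f := by
        intro S' B' g' hc hh'
        exact ihn ((univ.filter fun v => g' v ≠ 0).card) S' B' g' (by omega) le_rfl hh'
      by_cases htight : ∃ U, U ⊆ S ∧ (∀ a ∈ B, a.2 ∈ U → a.1 ∈ U) ∧ U.Nonempty ∧ U ≠ S ∧
          ∑ v ∈ U, g v = 0
      · obtain ⟨U, h1, h2, h3, h4, h5⟩ := htight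
        exact gale_split S B g ⟨harc, hsupp, hsum, hcut⟩ U h1 h2 h3 h4 h5 IHsplit
      push_neg at htight
      have hstrict : ∀ U, U ⊆ S → (∀ a ∈ B, a.2 ∈ U → a.1 ∈ U) → U.Nonempty → U ≠ S →
          ∑ v ∈ U, g v < 0 := fun U hU hcl hne hneS =>
        lt_of_le_of_ne (hcut U hU hcl) (htight U hU hcl hne hneS)
      push_neg at hg0
      obtain ⟨u0, hu0⟩ := hg0
      have hex : ∃ v, 0 < g v := by
        by_contra hno
        push_neg at hno
        have hu0S : u0 ∈ S := by
          by_contra h; exact hu0 (hsupp u0 h)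
        have hrest : ∑ v ∈ S.erase u0, g v ≤ 0 :=
          Finset.sum_nonpos fun v _ => hno v
        have hgu0 : g u0 < 0 := lt_of_le_of_ne (hno u0) hu0
        have := Finset.sum_erase_add S g hu0S
        linarith
      obtain ⟨v, hv⟩ := hex
      have hvS : v ∈ S := by
        by_contra h; rw [hsupp v h] at hv; exact lt_irrefl 0 hv
      set R := univ.filter (fun u => Relation.ReflTransGen (fun x y => (x, y) ∈ B) u v) with hR
      have hvR : v ∈ R := by
        rw [hR, Finset.mem_filter]; exact ⟨Finset.mem_univ _, Relation.ReflTransGen.refl⟩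
      have hRcl : ∀ a ∈ B, a.2 ∈ R → a.1 ∈ R := by
        intro a ha h2
        rw [hR, Finset.mem_filter] at h2 ⊢
        refine ⟨Finset.mem_univ _, Relation.ReflTransGen.head ?_ h2.2⟩
        rw [Prod.mk.eta]; exact ha
      have hRS : R ⊆ S := by
        intro u hu
        rw [hR, Finset.mem_filter] at hu
        rcases Relation.ReflTransGen.cases_head hu.2 with heq | ⟨c, hc, _⟩
        · exact heq ▸ hvS
        · exact (harc (u, c) hc).1
      have hRsum : ∑ x ∈ R, g x ≤ 0 := hcut R hRS hRcl
      have hwex : ∃ w ∈ R, g w < 0 := by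
        by_contra hno
        push_neg at hno
        have h1 : (0:ℝ) ≤ ∑ x ∈ R.erase v, g x :=
          Finset.sum_nonneg fun x hx => hno x (Finset.mem_of_mem_erase hx)
        have h2 := Finset.sum_erase_add R g hvR
        linarith
      obtain ⟨w, hwR, hgw⟩ := hwex
      have hwS : w ∈ S := hRS hwR
      have hwreach : Relation.ReflTransGen (fun x y => (x, y) ∈ B) w v := by
        rw [hR, Finset.mem_filter] at hwR; exact hwR.2
      set D := (univ : Finset (Finset V)).filter
        (fun U => U ⊆ S ∧ (∀ a ∈ B, a.2 ∈ U → a.1 ∈ U) ∧ w ∈ U ∧ v ∉ U) with hD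
      set T := insert (g v) (insert (-g w) (D.image fun U => -∑ u ∈ U, g u)) with hT
      have hTne : T.Nonempty := ⟨g v, by rw [hT]; exact Finset.mem_insert_self _ _⟩
      set δ := T.min' hTne with hδdef
      have hTpos : ∀ t ∈ T, 0 < t := by
        intro t ht
        rw [hT] at ht
        simp only [Finset.mem_insert, Finset.mem_image] at ht
        rcases ht with rfl | rfl | ⟨U, hU, rfl⟩
        · exact hv
        · linarith
        · rw [hD, Finset.mem_filter] at hU
          obtain ⟨_, hUS, hUcl, hwU, hvU⟩ := hU
          have := hstrict U hUS hUcl ⟨w, hwU⟩ (fun h => hvU (h ▸ hvS))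
          linarith
      have hδpos : 0 < δ := hTpos δ (Finset.min'_mem T hTne)
      have hδv : δ ≤ g v := Finset.min'_le T _ (by rw [hT]; exact Finset.mem_insert_self _ _)
      have hδw : δ ≤ -g w := Finset.min'_le T _
        (by rw [hT]; exact Finset.mem_insert_of_mem (Finset.mem_insert_self _ _))
      have hδU : ∀ U ∈ D, δ ≤ -∑ u ∈ U, g u := fun U hU =>
        Finset.min'_le T _ (by
          rw [hT]
          exact Finset.mem_insert_of_mem (Finset.mem_insert_of_mem
            (Finset.mem_image.mpr ⟨U, hU, rfl⟩)))
      have hwv : w ≠ v := fun h => by rw [h] at hgw; linarith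
      have hBne : ∀ a ∈ B, a.1 ≠ a.2 := fun a ha => (harc a ha).2.2
      obtain ⟨p, hp0, hpsupp, hpdiv⟩ := exists_path_flow B hBne δ hδpos.le v w hwreach
      set g' : V → ℝ :=
        fun u => g u - δ * ((if u = v then 1 else 0) - (if u = w then 1 else 0)) with hg'
      have hg'v : g' v = g v - δ := by
        rw [hg']; simp [hwv.symm]
      have hg'w : g' w = g w + δ := by
        rw [hg']; simp [hwv]
      have hg'other : ∀ u, u ≠ v → u ≠ w → g' u = g u := by
        intro u h1 h2; rw [hg']; simp [h1, h2]
      have hclosed_vw : ∀ U : Finset V, (∀ a ∈ B, a.2 ∈ U → a.1 ∈ U) → v ∈ U → w ∈ U := by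
        intro U hUcl hvU
        have key : ∀ x, Relation.ReflTransGen (fun x y => (x, y) ∈ B) x v → x ∈ U := by
          intro x hx
          induction hx using Relation.ReflTransGen.head_induction_on with
          | refl => exact hvU
          | head hstep _ ih => exact hUcl _ hstep ih
        exact key w hwreach
      have hsumU : ∀ U : Finset V, ∑ u ∈ U, g' u
          = ∑ u ∈ U, g u - δ * ((if v ∈ U then 1 else 0) - (if w ∈ U then 1 else 0)) := by
        intro U
        rw [hg', Finset.sum_sub_distrib]
        congr 1
        rw [← Finset.mul_sum, Finset.sum_sub_distrib]
        congr 2 <;> simp [Finset.sum_ite_eq']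
      have hh' : GaleHyp S B g' := by
        refine ⟨harc, ?_, ?_, ?_⟩
        · intro u hu
          rw [hg'other u (fun h => hu (h ▸ hvS)) (fun h => hu (h ▸ hwS))]
          exact hsupp u hu
        · rw [hsumU S, hsum]
          simp [hvS, hwS]
        · intro U hUS hUcl
          rw [hsumU U]
          by_cases hvU : v ∈ U
          · have hwU : w ∈ U := hclosed_vw U hUcl hvU
            have := hcut U hUS hUcl
            simp only [hvU, hwU, if_pos]
            linarith
          · by_cases hwU : w ∈ U
            · have hUD : U ∈ D := by
                rw [hD, Finset.mem_filter]
                exact ⟨Finset.mem_univ _, hUS, hUcl, hwU, hvU⟩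
              have := hδU U hUD
              rw [if_neg hvU, if_pos hwU]
              linarith
            · have := hcut U hUS hUcl
              rw [if_neg hvU, if_neg hwU]
              linarith
      have hcomb : (∃ f', GaleSol B g' f') → ∃ f, GaleSol B g f := by
        rintro ⟨f', h1, h2, h3⟩
        refine ⟨fun x y => f' x y + p x y,
          fun x y => add_nonneg (h1 x y) (hp0 x y), ?_, ?_⟩
        · intro x y hxy
          show f' x y + p x y = 0
          rw [h2 x y hxy, hpsupp x y hxy, add_zero]
        · intro u
          rw [Finset.sum_add_distrib, Finset.sum_add_distrib]
          have h3u := h3 u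
          have hpu := hpdiv u
          rw [hg'] at h3u
          simp only at h3u
          linarith
      have hδmem : δ ∈ T := Finset.min'_mem T hTne
      rw [hT] at hδmem
      simp only [Finset.mem_insert, Finset.mem_image] at hδmem
      rcases hδmem with hδgv | hδgw | ⟨U0, hU0D, hδU0⟩
      · -- δ = g v : support shrinks, use inner IH
        apply hcomb
        refine ihm S B g' hSn ?_ hh'
        have hsub : (univ.filter fun u => g' u ≠ 0) ⊆ (univ.filter fun u => g u ≠ 0).erase v := by
          intro u hu
          rw [Finset.mem_filter] at hu
          rw [Finset.mem_erase, Finset.mem_filter]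
          by_cases huv : u = v
          · exfalso
            rw [huv, hg'v, hδgv] at hu
            exact hu.2 (sub_self _)
          · refine ⟨huv, Finset.mem_univ _, ?_⟩
            by_cases huw : u = w
            · rw [huw]; exact hgw.ne
            · rw [hg'other u huv huw] at hu; exact hu.2
        have hvmem : v ∈ univ.filter (fun u => g u ≠ 0) := by
          rw [Finset.mem_filter]; exact ⟨Finset.mem_univ _, hv.ne'⟩
        calc (univ.filter fun u => g' u ≠ 0).card
            ≤ ((univ.filter fun u => g u ≠ 0).erase v).card := Finset.card_le_card hsub
          _ = (univ.filter fun u => g u ≠ 0).card - 1 := Finset.card_erase_of_mem hvmem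
          _ ≤ m := by
              have := Finset.card_pos.mpr ⟨v, hvmem⟩
              omega
      · -- δ = -g w : support shrinks, use inner IH
        apply hcomb
        refine ihm S B g' hSn ?_ hh'
        have hsub : (univ.filter fun u => g' u ≠ 0) ⊆ (univ.filter fun u => g u ≠ 0).erase w := by
          intro u hu
          rw [Finset.mem_filter] at hu
          rw [Finset.mem_erase, Finset.mem_filter]
          by_cases huw : u = w
          · exfalso
            rw [huw, hg'w] at hu
            apply hu.2
            rw [hδgw]; ring
          · refine ⟨huw, Finset.mem_univ _, ?_⟩
            by_cases huv : u = v
            · rw [huv]; exact hv.ne'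
            · rw [hg'other u huv huw] at hu; exact hu.2
        have hwmem : w ∈ univ.filter (fun u => g u ≠ 0) := by
          rw [Finset.mem_filter]; exact ⟨Finset.mem_univ _, hgw.ne⟩
        calc (univ.filter fun u => g' u ≠ 0).card
            ≤ ((univ.filter fun u => g u ≠ 0).erase w).card := Finset.card_le_card hsub
          _ = (univ.filter fun u => g u ≠ 0).card - 1 := Finset.card_erase_of_mem hwmem
          _ ≤ m := by
              have := Finset.card_pos.mpr ⟨w, hwmem⟩
              omega
      · -- δ = -∑_{U0} g : U0 becomes tight for g', split
        apply hcomb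
        rw [hD, Finset.mem_filter] at hU0D
        obtain ⟨_, hU0S, hU0cl, hwU0, hvU0⟩ := hU0D
        refine gale_split S B g' hh' U0 hU0S hU0cl ⟨w, hwU0⟩
          (fun h => hvU0 (h ▸ hvS)) ?_ IHsplit
        rw [hsumU U0]
        simp only [if_neg hvU0, if_pos hwU0]
        rw [← hδU0]
        ring

end Aux

open Classical in
lemma crossing_arc [Fintype V] [DecidableEq V] (A : Finset (V × V)) (U : Finset V) :
    ∀ a b : V, Relation.ReflTransGen (fun x y => (x, y) ∈ A ∨ (y, x) ∈ A) a b →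
      a ∈ U → b ∉ U → ∃ x y, x ∈ U ∧ y ∉ U ∧ ((x, y) ∈ A ∨ (y, x) ∈ A) := by
  intro a b hab
  induction hab with
  | refl => intro h1 h2; exact absurd h1 h2
  | @tail b c _ hstep ih =>
    intro ha hc
    by_cases hb : b ∈ U
    · exact ⟨b, c, hb, hc, hstep⟩
    · exact ih ha hb

theorem stmt7 [Fintype V] [DecidableEq V]
    (A : Finset (V × V)) (hloop : ∀ v : V, (v, v) ∉ A)
    (hweak : ∀ a b : V,
      Relation.ReflTransGen (fun x y => (x, y) ∈ A ∨ (y, x) ∈ A) a b)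
    (h : V → ℝ) (hsum : ∑ v : V, h v = 0) :
    (∃ z : V → V → ℝ, (∀ a ∈ A, 0 < z a.1 a.2) ∧ ∀ v : V, excess A z {v} = h v) ↔
      ∀ U : Finset V, U.Nonempty → U ≠ Finset.univ → arcsIn A U = ∅ →
        ∑ v ∈ U, h v < 0 := by
  classical
  constructor
  · rintro ⟨z, hzpos, hzex⟩ U hUne hUneq hUin
    obtain ⟨u, hu⟩ := hUne
    obtain ⟨u', hu'⟩ : ∃ u', u' ∉ U := by
      by_contra hno
      push_neg at hno
      exact hUneq (Finset.eq_univ_iff_forall.mpr hno)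
    obtain ⟨x, y, hxU, hyU, harc⟩ := crossing_arc A U u u' (hweak u u') hu hu'
    have hxyA : (x, y) ∈ A := by
      rcases harc with hA | hA
      · exact hA
      · exfalso
        have : (y, x) ∈ arcsIn A U := by
          rw [arcsIn, Finset.mem_filter]; exact ⟨hA, hyU, hxU⟩
        rw [hUin] at this
        exact absurd this (Finset.notMem_empty _)
    have hout : (x, y) ∈ arcsOut A U := by
      rw [arcsOut, Finset.mem_filter]; exact ⟨hxyA, hxU, hyU⟩
    have hpos : 0 < ∑ a ∈ arcsOut A U, z a.1 a.2 := by
      refine Finset.sum_pos (fun a ha => hzpos a ?_) ⟨(x, y), hout⟩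
      exact Finset.mem_of_mem_filter a ha
    have heq : ∑ v ∈ U, h v = excess A z U := by
      rw [← sum_excess_singleton]
      exact Finset.sum_congr rfl fun v _ => (hzex v).symm
    rw [heq, excess, hUin]
    simpa using hpos
  · intro hcond
    set 𝒰 := (univ : Finset (Finset V)).filter
      (fun U => U.Nonempty ∧ U ≠ univ ∧ arcsIn A U = ∅) with h𝒰
    have h𝒰pos : ∀ U ∈ 𝒰, 0 < -∑ v ∈ U, h v := by
      intro U hU
      rw [h𝒰, Finset.mem_filter] at hU
      obtain ⟨_, h1, h2, h3⟩ := hU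
      have := hcond U h1 h2 h3
      linarith
    obtain ⟨m, hmpos, hmU⟩ : ∃ m : ℝ, 0 < m ∧ ∀ U ∈ 𝒰, m ≤ -∑ v ∈ U, h v := by
      by_cases hne : 𝒰.Nonempty
      · refine ⟨(𝒰.image fun U => -∑ v ∈ U, h v).min' (hne.image _), ?_, ?_⟩
        · have hmm := Finset.min'_mem (𝒰.image fun U => -∑ v ∈ U, h v) (hne.image _)
          rw [Finset.mem_image] at hmm
          obtain ⟨U, hU, hUeq⟩ := hmm
          rw [← hUeq]
          exact h𝒰pos U hU
        · intro U hU
          exact Finset.min'_le _ _ (Finset.mem_image.mpr ⟨U, hU, rfl⟩)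
      · exact ⟨1, one_pos, fun U hU => absurd ⟨U, hU⟩ hne⟩
    obtain ⟨ε, hεpos, hεA⟩ : ∃ ε : ℝ, 0 < ε ∧ ε * A.card < m := by
      have hc0 : (0:ℝ) ≤ (A.card : ℝ) := Nat.cast_nonneg _
      have hc1 : (0:ℝ) < (A.card : ℝ) + 1 := by linarith
      refine ⟨m / ((A.card : ℝ) + 1), div_pos hmpos hc1, ?_⟩
      rw [div_mul_eq_mul_div, div_lt_iff₀ hc1]
      nlinarith
    set z0 : V → V → ℝ := fun x y => if (x, y) ∈ A then ε else 0 with hz0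
    have hz0supp : ∀ x y, (x, y) ∉ A → z0 x y = 0 := by
      intro x y hxy; rw [hz0]; simp [hxy]
    set g : V → ℝ := fun v => h v - excess A z0 {v} with hg
    have hAa : ∀ a : V × V, a ∈ A → (a.1, a.2) ∈ A := by
      intro a ha; rw [Prod.mk.eta]; exact ha
    have hexU : ∀ U : Finset V, (∀ a ∈ A, a.2 ∈ U → a.1 ∈ U) →
        excess A z0 U = -(ε * (arcsOut A U).card) := by
      intro U hUcl
      have hin : arcsIn A U = ∅ := by
        rw [Finset.eq_empty_iff_forall_notMem]
        intro a ha
        rw [arcsIn, Finset.mem_filter] at ha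
        exact ha.2.1 (hUcl a ha.1 ha.2.2)
      rw [excess, hin]
      have : ∑ a ∈ arcsOut A U, z0 a.1 a.2 = ∑ a ∈ arcsOut A U, ε := by
        refine Finset.sum_congr rfl fun a ha => ?_
        rw [hz0]
        simp [hAa a (Finset.mem_of_mem_filter a ha)]
      rw [this]
      simp [mul_comm]
    have hcard_le : ∀ U : Finset V, ((arcsOut A U).card : ℝ) ≤ A.card := by
      intro U
      exact_mod_cast Finset.card_le_card (Finset.filter_subset _ _)
    have hhyp : GaleHyp (univ : Finset V) A g := by
      refine ⟨?_, ?_, ?_, ?_⟩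
      · intro a ha
        refine ⟨Finset.mem_univ _, Finset.mem_univ _, fun he => ?_⟩
        have h2 := hAa a ha
        rw [← he] at h2
        exact hloop a.1 h2
      · intro v hv; exact absurd (Finset.mem_univ v) hv
      · rw [hg]
        simp only
        rw [Finset.sum_sub_distrib, hsum, sum_excess_singleton]
        have : excess A z0 univ = 0 := by
          rw [excess_eq]
          simp
        rw [this]
        ring
      · intro U _ hUcl
        have hU0 : ∑ v ∈ U, g v = ∑ v ∈ U, h v + ε * (arcsOut A U).card := by
          rw [hg]
          simp only
          rw [Finset.sum_sub_distrib, sum_excess_singleton, hexU U hUcl]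
          ring
        rw [hU0]
        rcases Finset.eq_empty_or_nonempty U with rfl | hUne
        · simp [arcsOut]
        rcases eq_or_ne U univ with rfl | hUneq
        · have : excess A z0 univ = 0 := by rw [excess_eq]; simp
          have h2 := hexU univ hUcl
          rw [this] at h2
          have h3 : ∑ v ∈ (univ : Finset V), h v = 0 := hsum
          rw [h3]
          linarith
        · have hUin : arcsIn A U = ∅ := by
            rw [Finset.eq_empty_iff_forall_notMem]
            intro a ha
            rw [arcsIn, Finset.mem_filter] at ha
            exact ha.2.1 (hUcl a ha.1 ha.2.2)
          have hU𝒰 : U ∈ 𝒰 := by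
            rw [h𝒰, Finset.mem_filter]
            exact ⟨Finset.mem_univ _, hUne, hUneq, hUin⟩
          have h1 := hmU U hU𝒰
          have h2 : ε * (arcsOut A U).card ≤ ε * A.card :=
            mul_le_mul_of_nonneg_left (hcard_le U) hεpos.le
          linarith
    obtain ⟨f, hfpos, hfsupp, hfdiv⟩ :=
      gale_aux (Fintype.card V) ((univ.filter fun v => g v ≠ 0).card)
        univ A g (by simp) le_rfl hhyp
    refine ⟨fun x y => z0 x y + f x y, ?_, ?_⟩
    · intro a ha
      have h1 : z0 a.1 a.2 = ε := by rw [hz0]; simp [hAa a ha]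
      have h2 := hfpos a.1 a.2
      show 0 < z0 a.1 a.2 + f a.1 a.2
      rw [h1]; linarith
    · intro v
      have hzsupp : ∀ x y, (x, y) ∉ A → z0 x y + f x y = 0 := by
        intro x y hxy
        rw [hz0supp x y hxy, hfsupp x y hxy, add_zero]
      rw [excess_singleton_eq_dvg A _ hzsupp v]
      have h1 := excess_singleton_eq_dvg A z0 hz0supp v
      have h2 := hfdiv v
      have h3 : g v = h v - excess A z0 {v} := by rw [hg]
      rw [Finset.sum_add_distrib, Finset.sum_add_distrib]
      linarith
end
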